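/- Let a ≥ 0 and b > 0, and define F(y) = (a + b|y|) y/|y| on {y ∈ ℝ³ : y ≠ 0}. Then F is differentiable with Jacobian DF(y) = b ŷŷᵀ + ((a + b|y|)/|y|)(I − ŷŷᵀ), where ŷ = y/|y| and ŷŷᵀ is the orthogonal projection onto the line spanned by ŷ; det DF(y) = b(a + b|y|)²/|y|²; and for x = F(y), writing x̂ = x/|x|, the push-forward matrix satisfies DF(y) DF(y)ᵀ / det DF(y) = ((|x| − a)²/(b|x|²)) x̂x̂ᵀ + (1/b)(I − x̂x̂ᵀ). -/

import Mathlib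

/-!
Off the origin `F y = a • ŷ + b • y`, and `y ↦ ŷ` has derivative `(I - P) / |y|` with
`P = ŷŷᵀ`, so `DF(y) = b • P + μ • (I - P)` with `μ = (a + b|y|)/|y|`. Since `P` is an
idempotent, such matrices multiply eigenvalue by eigenvalue, and the matrix determinant lemma
gives `det DF(y) = b μ²`. Finally `F y` points along `ŷ` with `|F y| = a + b|y| = μ |y|`, which
turns `DF DFᵀ / det DF = (b / μ²) • P + b⁻¹ • (I - P)` into the stated form.
-/

/-- The Euclidean norm on `Fin 3 → ℝ`. -/
noncomputable def enorm3 (x : Fin 3 → ℝ) : ℝ := Real.sqrt (x 0 ^ 2 + x 1 ^ 2 + x 2 ^ 2)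

/-- The Jacobian matrix of a map `F : ℝ³ → ℝ³` at a point `y`. -/
noncomputable def jac (F : (Fin 3 → ℝ) → (Fin 3 → ℝ)) (y : Fin 3 → ℝ) :
    Matrix (Fin 3) (Fin 3) ℝ :=
  Matrix.of fun i j => fderiv ℝ F y (Pi.single j 1) i

open Matrix

section Projection

variable {n R : Type*} [Fintype n]

theorem isIdempotentElem_vecMulVec_self [CommRing R] {u : n → R} (hu : u ⬝ᵥ u = 1) :
    IsIdempotentElem (vecMulVec u u) := by
  rw [IsIdempotentElem, vecMulVec_mul_vecMulVec, hu, one_smul]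

theorem IsIdempotentElem.smul_add_smul_one_sub_mul {A : Type*} [CommRing R] [Ring A]
    [Algebra R A] {P : A} (hP : IsIdempotentElem P) (l m l' m' : R) :
    (l • P + m • (1 - P)) * (l' • P + m' • (1 - P)) = (l * l') • P + (m * m') • (1 - P) := by
  simp only [add_mul, mul_add, smul_mul_smul_comm, hP.eq, hP.mul_one_sub_self,
    hP.one_sub_mul_self, hP.one_sub.eq, smul_zero, add_zero, zero_add]

theorem det_smul_vecMulVec_add_smul_one_sub [DecidableEq n] [Field R] {u : n → R}
    (hu : u ⬝ᵥ u = 1) (l : R) {m : R} (hm : m ≠ 0) :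
    det (l • vecMulVec u u + m • (1 - vecMulVec u u)) = l * m ^ (Fintype.card n - 1) := by
  obtain ⟨k, hk⟩ : ∃ k, Fintype.card n = k + 1 := by
    refine Nat.exists_eq_add_one.mpr (Fintype.card_pos_iff.mpr ?_)
    by_contra h
    simp [not_nonempty_iff.mp h] at hu
  have hrank_one : l • vecMulVec u u + m • (1 - vecMulVec u u) =
      m • (1 + replicateCol Unit (((l - m) / m) • u) * replicateRow Unit u) := by
    rw [← vecMulVec_eq, smul_vecMulVec]
    match_scalars <;> field_simp
    ring
  rw [hrank_one, det_smul, det_one_add_replicateCol_mul_replicateRow, dotProduct_smul, hu, hk,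
    Nat.add_sub_cancel, pow_succ, smul_eq_mul, mul_one]
  field_simp
  ring

end Projection

theorem enorm3_eq_norm (x : Fin 3 → ℝ) : enorm3 x = ‖WithLp.toLp 2 x‖ := by
  simp [enorm3, EuclideanSpace.norm_eq, Fin.sum_univ_three]

theorem enorm3_sq (x : Fin 3 → ℝ) : enorm3 x ^ 2 = x ⬝ᵥ x := by
  rw [enorm3_eq_norm, EuclideanSpace.norm_sq_eq]
  simp [dotProduct, sq]

theorem enorm3_pos {x : Fin 3 → ℝ} (hx : x ≠ 0) : 0 < enorm3 x := by
  simpa [enorm3_eq_norm] using hx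

theorem enorm3_smul (c : ℝ) (x : Fin 3 → ℝ) : enorm3 (c • x) = |c| * enorm3 x := by
  simp [enorm3_eq_norm, WithLp.toLp_smul, norm_smul]

theorem dotProduct_inv_enorm3_smul_self {y : Fin 3 → ℝ} (hy : y ≠ 0) :
    ((enorm3 y)⁻¹ • y) ⬝ᵥ ((enorm3 y)⁻¹ • y) = 1 := by
  have hr := (enorm3_pos hy).ne'
  rw [smul_dotProduct, dotProduct_smul, ← enorm3_sq, smul_eq_mul, smul_eq_mul]
  field_simp

theorem hasFDerivAt_enorm3 {y : Fin 3 → ℝ} (hy : y ≠ 0) :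
    HasFDerivAt enorm3 ((enorm3 y)⁻¹ • (dotProductBilin ℝ ℝ y).toContinuousLinearMap) y := by
  have hsqrt := ((EuclideanSpace.equiv (Fin 3) ℝ).symm.hasFDerivAt (x := y)).norm_sq.sqrt
    (by simpa using hy)
  have hfun : (fun x => √(‖(EuclideanSpace.equiv (Fin 3) ℝ).symm x‖ ^ 2)) = enorm3 := by
    funext x
    rw [Real.sqrt_sq (norm_nonneg _), enorm3_eq_norm]
    rfl
  rw [hfun] at hsqrt
  refine hsqrt.congr_fderiv (ContinuousLinearMap.ext fun v => ?_)
  simp [enorm3_eq_norm, EuclideanSpace.inner_toLp_toLp, dotProduct_comm v]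
  ring

theorem hasFDerivAt_inv_enorm3_smul {y : Fin 3 → ℝ} (hy : y ≠ 0) :
    HasFDerivAt (fun z => (enorm3 z)⁻¹ • z)
      (toLin' ((enorm3 y)⁻¹ •
        (1 - vecMulVec ((enorm3 y)⁻¹ • y) ((enorm3 y)⁻¹ • y)))).toContinuousLinearMap y := by
  have hr := (enorm3_pos hy).ne'
  have hinv := (hasDerivAt_inv hr).comp_hasFDerivAt y (hasFDerivAt_enorm3 hy)
  refine (hinv.smul (hasFDerivAt_id y)).congr_fderiv (ContinuousLinearMap.ext fun v => ?_)
  simp [toLin'_apply, vecMulVec_mulVec]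
  module

theorem hasFDerivAt_radial (a b : ℝ) {y : Fin 3 → ℝ} (hy : y ≠ 0) :
    HasFDerivAt (fun z => ((a + b * enorm3 z) / enorm3 z) • z)
      (toLin' (b • vecMulVec ((enorm3 y)⁻¹ • y) ((enorm3 y)⁻¹ • y) +
        ((a + b * enorm3 y) / enorm3 y) •
          (1 - vecMulVec ((enorm3 y)⁻¹ • y) ((enorm3 y)⁻¹ • y)))).toContinuousLinearMap y := by
  have hr := (enorm3_pos hy).ne'
  have hsplit : (fun z => ((a + b * enorm3 z) / enorm3 z) • z) =
      fun z => a • ((enorm3 z)⁻¹ • z) + b • z := by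
    funext z
    rcases eq_or_ne z 0 with rfl | hz
    · simp
    · have := (enorm3_pos hz).ne'
      match_scalars
      field_simp
  rw [hsplit]
  refine (((hasFDerivAt_inv_enorm3_smul hy).const_smul a).add
    ((hasFDerivAt_id y).const_smul b)).congr_fderiv (ContinuousLinearMap.ext fun v => ?_)
  simp [toLin'_apply, vecMulVec_mulVec]
  match_scalars <;> field_simp
  ring

theorem jac_eq_of_hasFDerivAt {F : (Fin 3 → ℝ) → Fin 3 → ℝ} {y : Fin 3 → ℝ}
    {M : Matrix (Fin 3) (Fin 3) ℝ} (h : HasFDerivAt F (toLin' M).toContinuousLinearMap y) :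
    jac F y = M := by
  ext i j
  simp [jac, h.fderiv]

/-- For `F(y) = (a + b|y|) y/|y|` on `ℝ³ \ {0}` with `a ≥ 0`, `b > 0`:
`F` is differentiable with Jacobian `b ŷŷᵀ + ((a+b|y|)/|y|)(I − ŷŷᵀ)`,
`det DF(y) = b(a+b|y|)²/|y|²`, and for `x = F(y)` the push-forward matrix satisfies
`DF DFᵀ/det DF = ((|x|−a)²/(b|x|²)) x̂x̂ᵀ + (1/b)(I − x̂x̂ᵀ)`. -/
theorem radial_map_jacobian
    (a b : ℝ) (ha : 0 ≤ a) (hb : 0 < b)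
    (F : (Fin 3 → ℝ) → (Fin 3 → ℝ))
    (hF : ∀ y : Fin 3 → ℝ, y ≠ 0 → F y = ((a + b * enorm3 y) / enorm3 y) • y) :
    ∀ y : Fin 3 → ℝ, y ≠ 0 →
      DifferentiableAt ℝ F y ∧
      jac F y = b • Matrix.vecMulVec ((enorm3 y)⁻¹ • y) ((enorm3 y)⁻¹ • y) +
        ((a + b * enorm3 y) / enorm3 y) •
          (1 - Matrix.vecMulVec ((enorm3 y)⁻¹ • y) ((enorm3 y)⁻¹ • y)) ∧
      (jac F y).det = b * (a + b * enorm3 y) ^ 2 / (enorm3 y) ^ 2 ∧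
      ((jac F y).det)⁻¹ • (jac F y * (jac F y).transpose) =
        ((enorm3 (F y) - a) ^ 2 / (b * (enorm3 (F y)) ^ 2)) •
          Matrix.vecMulVec ((enorm3 (F y))⁻¹ • F y) ((enorm3 (F y))⁻¹ • F y) +
        b⁻¹ • (1 - Matrix.vecMulVec ((enorm3 (F y))⁻¹ • F y) ((enorm3 (F y))⁻¹ • F y)) := by
  intro y hy
  have hr := enorm3_pos hy
  have hμ : 0 < a + b * enorm3 y := by positivity
  have hu := dotProduct_inv_enorm3_smul_self hy
  set P := vecMulVec ((enorm3 y)⁻¹ • y) ((enorm3 y)⁻¹ • y)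
  have hderiv : HasFDerivAt F _ y := (hasFDerivAt_radial a b hy).congr_of_eventuallyEq
    ((eventually_ne_nhds hy).mono hF)
  have hjac := jac_eq_of_hasFDerivAt hderiv
  have hdet : (jac F y).det = b * ((a + b * enorm3 y) / enorm3 y) ^ 2 := by
    rw [hjac, det_smul_vecMulVec_add_smul_one_sub hu _ (by positivity)]
    simp
  have hnormF : enorm3 (F y) = a + b * enorm3 y := by
    rw [hF y hy, enorm3_smul, abs_of_pos (by positivity)]
    field_simp
  have hunitF : (enorm3 (F y))⁻¹ • F y = (enorm3 y)⁻¹ • y := by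
    rw [hnormF, hF y hy, smul_smul]
    congr 1
    field_simp
  refine ⟨hderiv.differentiableAt, hjac, by rw [hdet, div_pow, mul_div_assoc], ?_⟩
  have hPt : Pᵀ = P := by simp [P]
  rw [hunitF, hnormF, hdet, hjac, transpose_add, transpose_smul, transpose_smul, transpose_sub,
    transpose_one, hPt, (isIdempotentElem_vecMulVec_self hu).smul_add_smul_one_sub_mul]
  match_scalars <;> field_simp
  ring
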